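/- Let n ≥ c ≥ ρ ≥ s be integers, A ∈ ℝ^{n×ρ} a matrix with rank at least s, and V ∈ ℝ^{c×ρ} a matrix with orthonormal columns. Then (AVᵀ)_s = A_s Vᵀ, i.e., the best rank-s approximation of AVᵀ equals the best rank-s approximation of A multiplied by Vᵀ. -/
import Mathlib


open Matrix

noncomputable def frobSq {n m : ℕ} (A : Matrix (Fin n) (Fin m) ℝ) : ℝ :=
  ∑ i, ∑ j, (A i j) ^ 2

/-- `B` is a best rank-`s` approximation of `A` in Frobenius norm
(i.e. a rank-`s` truncated SVD of `A`). -/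
def IsTruncatedSVD {n m : ℕ} (A B : Matrix (Fin n) (Fin m) ℝ) (s : ℕ) : Prop :=
  B.rank ≤ s ∧ ∀ Z : Matrix (Fin n) (Fin m) ℝ, Z.rank ≤ s → frobSq (A - B) ≤ frobSq (A - Z)

lemma frobSq_eq_trace {n m : ℕ} (A : Matrix (Fin n) (Fin m) ℝ) :
    frobSq A = Matrix.trace (A * Aᵀ) := by
  simp [frobSq, Matrix.trace, Matrix.mul_apply, Matrix.diag, pow_two]

lemma frobSq_nonneg {n m : ℕ} (A : Matrix (Fin n) (Fin m) ℝ) : 0 ≤ frobSq A := by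
  apply Finset.sum_nonneg; intro i _
  apply Finset.sum_nonneg; intro j _
  positivity

lemma frobSq_mul_orth {n c ρ : ℕ} (M : Matrix (Fin n) (Fin ρ) ℝ)
    (V : Matrix (Fin c) (Fin ρ) ℝ) (hV : Vᵀ * V = 1) :
    frobSq (M * Vᵀ) = frobSq M := by
  rw [frobSq_eq_trace, frobSq_eq_trace, Matrix.transpose_mul, Matrix.transpose_transpose]
  simp only [Matrix.mul_assoc]
  rw [← Matrix.mul_assoc Vᵀ V Mᵀ, hV, Matrix.one_mul]

lemma frobSq_pythagoras {n c ρ : ℕ} (M : Matrix (Fin n) (Fin c) ℝ)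
    (V : Matrix (Fin c) (Fin ρ) ℝ) (hV : Vᵀ * V = 1) :
    frobSq M = frobSq (M * (V * Vᵀ)) + frobSq (M * (1 - V * Vᵀ)) := by
  set P : Matrix (Fin c) (Fin c) ℝ := V * Vᵀ with hPdef
  have hP : P * P = P := by
    rw [hPdef]; simp only [Matrix.mul_assoc]
    rw [← Matrix.mul_assoc Vᵀ V Vᵀ, hV, Matrix.one_mul]
  have hPt : Pᵀ = P := by rw [hPdef, Matrix.transpose_mul, Matrix.transpose_transpose]
  have hQ : (1 - P) * (1 - P) = 1 - P := by
    rw [Matrix.sub_mul, Matrix.mul_sub, Matrix.mul_sub, hP]; simp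
  have hQt : (1 - P)ᵀ = 1 - P := by rw [Matrix.transpose_sub, Matrix.transpose_one, hPt]
  rw [frobSq_eq_trace, frobSq_eq_trace, frobSq_eq_trace]
  have h1 : M * P * (M * P)ᵀ = M * P * Mᵀ := by
    rw [Matrix.transpose_mul, hPt]
    simp only [Matrix.mul_assoc]
    rw [← Matrix.mul_assoc P P Mᵀ, hP]
  have h2 : M * (1 - P) * (M * (1 - P))ᵀ = M * (1 - P) * Mᵀ := by
    rw [Matrix.transpose_mul, hQt]
    simp only [Matrix.mul_assoc]
    rw [← Matrix.mul_assoc (1 - P) (1 - P) Mᵀ, hQ]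
  rw [h1, h2, ← Matrix.trace_add, ← Matrix.add_mul, ← Matrix.mul_add,
    show P + (1 - P) = 1 by abel, Matrix.mul_one]

/-- For `n ≥ c ≥ ρ ≥ s`, `A ∈ ℝ^{n×ρ}` with rank at least `s`,
and `V ∈ ℝ^{c×ρ}` with orthonormal columns, the best rank-`s` approximation of
`A Vᵀ` is `A_s Vᵀ`: if `As` is a rank-`s` truncated SVD of `A`, then `As * Vᵀ`
is a rank-`s` truncated SVD of `A * Vᵀ`. -/
theorem truncSVD_mul_orthonormal {n c ρ s : ℕ}
    (h1 : c ≤ n) (h2 : ρ ≤ c) (h3 : s ≤ ρ)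
    (A : Matrix (Fin n) (Fin ρ) ℝ) (hrankA : s ≤ A.rank)
    (V : Matrix (Fin c) (Fin ρ) ℝ) (hV : Vᵀ * V = 1)
    (As : Matrix (Fin n) (Fin ρ) ℝ) (hAs : IsTruncatedSVD A As s) :
    IsTruncatedSVD (A * Vᵀ) (As * Vᵀ) s := by
  obtain ⟨hrank, hopt⟩ := hAs
  constructor
  · exact le_trans (Matrix.rank_mul_le_left As Vᵀ) hrank
  · intro Z hZ
    have key : frobSq (A * Vᵀ - Z) =
        frobSq ((A - Z * V) * Vᵀ) + frobSq ((A * Vᵀ - Z) * (1 - V * Vᵀ)) := by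
      rw [frobSq_pythagoras (A * Vᵀ - Z) V hV]
      congr 2
      rw [Matrix.sub_mul, Matrix.sub_mul,
        show A * Vᵀ * (V * Vᵀ) = A * (Vᵀ * V) * Vᵀ by simp only [Matrix.mul_assoc], hV,
        Matrix.mul_one, Matrix.mul_assoc]
    have hZV : (Z * V).rank ≤ s := le_trans (Matrix.rank_mul_le_left Z V) hZ
    calc frobSq (A * Vᵀ - As * Vᵀ) = frobSq ((A - As) * Vᵀ) := by rw [Matrix.sub_mul]
      _ = frobSq (A - As) := frobSq_mul_orth _ V hV
      _ ≤ frobSq (A - Z * V) := hopt _ hZV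
      _ = frobSq ((A - Z * V) * Vᵀ) := (frobSq_mul_orth _ V hV).symm
      _ ≤ frobSq (A * Vᵀ - Z) := by
          rw [key]
          exact le_add_of_nonneg_right (frobSq_nonneg _)
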